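/- Gradient estimate for the discrete reaction–diffusion system: let u : [0,∞) → [0,1]^{T_N^d} be a solution of ∂_t u(t,i) = 2αN² (Δu(t,·))_i + β(1 − 2u(t,i)) + G(i, u(t,·)), and suppose there exists C_0 > 0 such that max_{i ∈ T_N^d} max_{1≤k≤d} |u(0, i+e_k) − u(0, i)| ≤ C_0/N, where e_1,…,e_d is the canonical basis. Then there exists a constant C > 0, independent of N and t, such that max_{i ∈ T_N^d} max_{1≤k≤d} |u(t, i+e_k) − u(t, i)| ≤ (C_0 + C√t)/N for all t ≥ 0. -/

import Mathlib

open scoped BigOperators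
open Finset

noncomputable section

/-- Sites of the discrete torus `T_N^d = (Z/NZ)^d`. -/
abbrev Site (d N : ℕ) := Fin d → ZMod N

/-- Configurations `{0,1}^{T_N^d}`. -/
abbrev Conf (d N : ℕ) := Site d N → Bool

/-- The unit vector `e_k` of the discrete torus. -/
def unitVec (d N : ℕ) (k : Fin d) : Site d N := fun l => if l = k then 1 else 0

/-- The local mean field `ρ_i(η) = K_N⁻¹ Σ_{j ∈ V} η_{i+j}`. -/
def rho (d N : ℕ) (V : Finset (Site d N)) (η : Conf d N) (i : Site d N) : ℝ :=
  (∑ j ∈ V, if η (i + j) then (1 : ℝ) else 0) / (V.card : ℝ)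

/-- `κ_N = min(⌊K_N T⌋ - 1, ⌊K_N (1-T)⌋)`. -/
def kappaN (K : ℕ) (T : ℝ) : ℤ := min (⌊(K : ℝ) * T⌋ - 1) ⌊(K : ℝ) * (1 - T)⌋

/-- Probability of an event `A` under the product Bernoulli measure `υ_u = ⊗_i B(u_i)`. -/
def bprob (d N : ℕ) (u : Site d N → ℝ) (A : Set (Conf d N)) : ℝ :=
  if h : N = 0 then 0 else by
    haveI : NeZero N := ⟨h⟩
    exact ∑ η : Conf d N,
      (∏ i : Site d N, if η i then u i else 1 - u i) * A.indicator (fun _ => (1 : ℝ)) η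

/-- `c_0^+(u) = P_{υ_u}[ρ_0(η) ≥ 1 - κ_N/K_N]`. -/
def cplus (d N : ℕ) (V : Finset (Site d N)) (T : ℝ) (u : Site d N → ℝ) : ℝ :=
  bprob d N u {η | rho d N V η 0 ≥ 1 - (kappaN V.card T : ℝ) / (V.card : ℝ)}

/-- `c_0^-(u) = P_{υ_u}[ρ_0(η) ≤ κ_N/K_N]`. -/
def cminus (d N : ℕ) (V : Finset (Site d N)) (T : ℝ) (u : Site d N → ℝ) : ℝ :=
  bprob d N u {η | rho d N V η 0 ≤ (kappaN V.card T : ℝ) / (V.card : ℝ)}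

/-- The reaction term `G(u) = (1-u_0) c_0^+(u) - u_0 c_0^-(u)`. -/
def Gfun (d N : ℕ) (V : Finset (Site d N)) (T : ℝ) (u : Site d N → ℝ) : ℝ :=
  (1 - u 0) * cplus d N V T u - u 0 * cminus d N V T u

/-- `G(i,u) = G(τ_i u)`. -/
def Gi (d N : ℕ) (V : Finset (Site d N)) (T : ℝ) (i : Site d N) (u : Site d N → ℝ) : ℝ :=
  Gfun d N V T (fun j => u (i + j))

/-- The discrete Laplacian `(Δu)_i = Σ_{j : |i-j|=1} (u_j - u_i)`. -/
def discLap (d N : ℕ) (u : Site d N → ℝ) (i : Site d N) : ℝ :=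
  ∑ k : Fin d, ((u (i + unitVec d N k) - u i) + (u (i - unitVec d N k) - u i))

/-!
By Duhamel's formula, `u t = P_t (u 0) + ∫₀ᵗ P_{t-s} F(s) ds`, where `P_t = exp (t • 2αN² Δ)` is
the discrete heat semigroup and `F = β(1 - 2u) + G(·, u)` is bounded by `|β| + 1`. Since `Δ`
commutes with the discrete gradient, `∇ P_t (u 0)` solves the heat equation, and the maximum
principle keeps it below `C₀ / N`. For the integral term, Bernstein's argument shows that
`s |∇ P_s f|² + (2αN²)⁻¹ (P_s f)²` is a subsolution, so the maximum principle gives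
`|∇ P_s f| ≤ ‖f‖_∞ / (N √(2αs))`, and integrating `(t - s)^{-1/2}` over `[0, t]` yields `√t / N`.
-/

open Set Filter Topology

lemma HasDerivAt.eventually_nhdsGT_lt_add_mul {φ : ℝ → ℝ} {φ' x r M : ℝ}
    (hφ : HasDerivAt φ φ' x) (hr : 0 < r) (hle : φ x ≤ M) (hmax : φ x = M → φ' ≤ 0) :
    ∀ᶠ z in 𝓝[>] x, φ z < M + r * (z - x) := by
  rcases hle.lt_or_eq with hlt | heq
  · have hnear : ∀ᶠ z in 𝓝 x, φ z < M := hφ.continuousAt.eventually_lt continuousAt_const hlt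
    filter_upwards [nhdsWithin_le_nhds hnear, self_mem_nhdsWithin] with z hz hxz
    nlinarith [mul_pos hr (sub_pos.2 (show x < z from hxz))]
  · have hslope := hφ.hasDerivWithinAt.limsup_slope_le' (lt_irrefl x) ((hmax heq).trans_lt hr)
    filter_upwards [hslope, self_mem_nhdsWithin] with z hz hxz
    rw [slope_def_field, div_lt_iff₀ (sub_pos.2 hxz)] at hz
    linarith

section MaximumPrinciple

variable {ι : Type*} [Fintype ι] [Nonempty ι] {f f' : ℝ → ι → ℝ}

theorem le_of_deriv_nonpos_at_argmax {a b M : ℝ}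
    (hd : ∀ i, ∀ t ∈ Icc a b, HasDerivAt (fun s => f s i) (f' t i) t)
    (hmax : ∀ t ∈ Ico a b, ∀ i, (∀ j, f t j ≤ f t i) → f' t i ≤ 0)
    (ha : ∀ i, f a i ≤ M) : ∀ t ∈ Icc a b, ∀ i, f t i ≤ M := by
  set g : ℝ → ℝ := fun t => Finset.univ.sup' Finset.univ_nonempty (f t)
  have hfg : ∀ t i, f t i ≤ g t := fun t i => Finset.le_sup' (f t) (Finset.mem_univ i)
  have hg : ContinuousOn g (Icc a b) := fun t ht =>
    (ContinuousAt.finset_sup'_apply Finset.univ_nonempty fun i _ =>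
      (hd i t ht).continuousAt).continuousWithinAt
  have hslope : ∀ x ∈ Ico a b, ∀ r, 0 < r → ∃ᶠ z in 𝓝[>] x, slope g x z < r := by
    intro x hx r hr
    have hall := eventually_all.2 fun i =>
      (hd i x (Ico_subset_Icc_self hx)).eventually_nhdsGT_lt_add_mul hr (hfg x i)
        fun heq => hmax x hx i fun j => heq ▸ hfg x j
    refine Eventually.frequently ?_
    filter_upwards [hall, self_mem_nhdsWithin] with z hz hxz
    rw [slope_def_field, div_lt_iff₀ (sub_pos.2 hxz), sub_lt_iff_lt_add']
    exact (Finset.sup'_lt_iff Finset.univ_nonempty).2 fun i _ => hz i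
  intro t ht i
  exact (hfg t i).trans (image_le_of_liminf_slope_right_le_deriv_boundary hg
    (Finset.sup'_le _ _ fun i _ => ha i) continuousOn_const
    (fun x _ => hasDerivWithinAt_const x _ M) hslope ht)

end MaximumPrinciple

open scoped fwdDiff

section DiscreteCalculus

variable {d N : ℕ}

def sqGrad (v : Site d N → ℝ) (i : Site d N) : ℝ :=
  ∑ k : Fin d, ((v (i + unitVec d N k) - v i) ^ 2 + (v (i - unitVec d N k) - v i) ^ 2)

lemma discLap_add (v w : Site d N → ℝ) :
    discLap d N (v + w) = discLap d N v + discLap d N w := by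
  ext i
  simp only [discLap, Pi.add_apply, ← Finset.sum_add_distrib]
  exact Finset.sum_congr rfl fun k _ => by ring

lemma discLap_smul (c : ℝ) (v : Site d N → ℝ) : discLap d N (c • v) = c • discLap d N v := by
  ext i
  simp only [discLap, Pi.smul_apply, smul_eq_mul, Finset.mul_sum]
  exact Finset.sum_congr rfl fun k _ => by ring

lemma discLap_neg (v : Site d N → ℝ) : discLap d N (-v) = -discLap d N v := by
  simpa using discLap_smul (-1) v

lemma discLap_fwdDiff (h : Site d N) (v : Site d N → ℝ) :
    discLap d N (Δ_[h] v) = Δ_[h] (discLap d N v) := by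
  ext i
  simp only [discLap, fwdDiff, ← Finset.sum_sub_distrib]
  refine Finset.sum_congr rfl fun l _ => ?_
  rw [add_right_comm i, sub_add_eq_add_sub i]
  ring

lemma discLap_nonpos_of_isMax {v : Site d N → ℝ} {i : Site d N} (h : ∀ j, v j ≤ v i) :
    discLap d N v i ≤ 0 :=
  Finset.sum_nonpos fun k _ => by
    linarith [h (i + unitVec d N k), h (i - unitVec d N k)]

lemma discLap_sq (v : Site d N → ℝ) (i : Site d N) :
    discLap d N (v ^ 2) i = 2 * v i * discLap d N v i + sqGrad v i := by
  simp only [discLap, sqGrad, Pi.pow_apply, Finset.mul_sum, ← Finset.sum_add_distrib]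
  exact Finset.sum_congr rfl fun k _ => by ring

lemma sqGrad_nonneg (v : Site d N → ℝ) (i : Site d N) : 0 ≤ sqGrad v i :=
  Finset.sum_nonneg fun _ _ => by positivity

lemma sq_fwdDiff_unitVec_le_sqGrad (k : Fin d) (v : Site d N → ℝ) (i : Site d N) :
    Δ_[unitVec d N k] v i ^ 2 ≤ sqGrad v i :=
  (le_add_of_nonneg_right (sq_nonneg _)).trans <|
    Finset.single_le_sum (f := fun k => (v (i + unitVec d N k) - v i) ^ 2
      + (v (i - unitVec d N k) - v i) ^ 2) (fun _ _ => by positivity) (Finset.mem_univ k)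

end DiscreteCalculus

section HeatFlow

variable {d N : ℕ}

def IsHeatFlow (L b : ℝ) (v : ℝ → Site d N → ℝ) : Prop :=
  ∀ i, ∀ s ∈ Icc 0 b, HasDerivAt (fun s => v s i) (L * discLap d N (v s) i) s

variable {L b : ℝ} {v : ℝ → Site d N → ℝ}

lemma IsHeatFlow.neg (hv : IsHeatFlow L b v) : IsHeatFlow L b (fun s => -v s) :=
  fun i s hs => by
    rw [discLap_neg, Pi.neg_apply, mul_neg]
    exact (hv i s hs).neg

lemma IsHeatFlow.fwdDiff (hv : IsHeatFlow L b v) (h : Site d N) :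
    IsHeatFlow L b (fun s => Δ_[h] (v s)) := fun i s hs => by
  rw [discLap_fwdDiff]
  exact ((hv _ s hs).sub (hv i s hs)).congr_deriv (mul_sub ..).symm

variable [NeZero N]

theorem IsHeatFlow.le_of_le (hv : IsHeatFlow L b v) (hL : 0 ≤ L) (hb : 0 ≤ b) {M : ℝ}
    (h0 : ∀ i, v 0 i ≤ M) (i : Site d N) : v b i ≤ M :=
  le_of_deriv_nonpos_at_argmax hv
    (fun _ _ _ hmax => mul_nonpos_of_nonneg_of_nonpos hL (discLap_nonpos_of_isMax hmax)) h0
    b ⟨hb, le_rfl⟩ i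

theorem IsHeatFlow.abs_le_of_abs_le (hv : IsHeatFlow L b v) (hL : 0 ≤ L) (hb : 0 ≤ b) {c : ℝ}
    (h0 : ∀ i, |v 0 i| ≤ c) (i : Site d N) : |v b i| ≤ c := by
  have hup := hv.le_of_le hL hb (fun j => (le_abs_self _).trans (h0 j)) i
  have hdown := hv.neg.le_of_le hL hb (fun j => (neg_le_abs _).trans (h0 j)) i
  exact abs_le.2 ⟨neg_le.1 hdown, hup⟩

end HeatFlow

section Bernstein

variable {d N : ℕ}

/-- The left side is the time derivative of `s (Δ_[e] w)² + L⁻¹ w²` along the heat flow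
`∂ₛ w = L Δ w`; by `discLap_sq` this functional is a subsolution of the same flow. -/
lemma bernstein_deriv_le {L s : ℝ} (hL : 0 < L) (hs : 0 ≤ s) (k : Fin d) (w : Site d N → ℝ)
    (j : Site d N) :
    Δ_[unitVec d N k] w j ^ 2 + s * (2 * Δ_[unitVec d N k] w j
        * (L * discLap d N (Δ_[unitVec d N k] w) j)) + L⁻¹ * (2 * w j * (L * discLap d N w j))
      ≤ L * discLap d N (s • (Δ_[unitVec d N k] w) ^ 2 + L⁻¹ • w ^ 2) j := by
  have hgrad := sq_fwdDiff_unitVec_le_sqGrad k w j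
  have hgrad' : 0 ≤ s * L * sqGrad (Δ_[unitVec d N k] w) j :=
    mul_nonneg (mul_nonneg hs hL.le) (sqGrad_nonneg _ _)
  rw [discLap_add, discLap_smul, discLap_smul, Pi.add_apply, Pi.smul_apply, Pi.smul_apply,
    smul_eq_mul, smul_eq_mul, discLap_sq, discLap_sq]
  field_simp
  nlinarith

variable [NeZero N] {L b : ℝ} {v : ℝ → Site d N → ℝ}

theorem IsHeatFlow.abs_fwdDiff_le_div_sqrt (hv : IsHeatFlow L b v) (hL : 0 < L) (hb : 0 < b)
    (k : Fin d) {c : ℝ} (h0 : ∀ i, |v 0 i| ≤ c) (i : Site d N) :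
    |Δ_[unitVec d N k] (v b) i| ≤ c / √(L * b) := by
  set Φ : ℝ → Site d N → ℝ := fun s => s • (Δ_[unitVec d N k] (v s)) ^ 2 + L⁻¹ • v s ^ 2
  have hΦ : ∀ j, ∀ s ∈ Icc 0 b, HasDerivAt (fun s => Φ s j)
      (Δ_[unitVec d N k] (v s) j ^ 2 + s * (2 * Δ_[unitVec d N k] (v s) j
        * (L * discLap d N (Δ_[unitVec d N k] (v s)) j))
        + L⁻¹ * (2 * v s j * (L * discLap d N (v s) j))) s := fun j s hs => by
    have := ((hasDerivAt_id s).mul (((hv.fwdDiff (unitVec d N k)) j s hs).pow 2)).add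
      (((hv j s hs).pow 2).const_mul L⁻¹)
    refine HasDerivAt.congr_deriv (f := fun s => Φ s j) this ?_
    simp only [id, Pi.pow_apply, Nat.cast_ofNat]
    ring
  have hΦb := le_of_deriv_nonpos_at_argmax hΦ
    (fun s hs j hmax => (bernstein_deriv_le hL hs.1 k (v s) j).trans
      (mul_nonpos_of_nonneg_of_nonpos hL.le (discLap_nonpos_of_isMax hmax)))
    (M := L⁻¹ * c ^ 2) (fun j => by
      simp only [Φ, zero_smul, zero_add, Pi.smul_apply, Pi.pow_apply, smul_eq_mul]
      exact mul_le_mul_of_nonneg_left (sq_le_sq' (abs_le.1 (h0 j)).1 (abs_le.1 (h0 j)).2)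
        (inv_nonneg.2 hL.le)) b ⟨hb.le, le_rfl⟩ i
  have hc : 0 ≤ c := (abs_nonneg _).trans (h0 i)
  have hsq : Δ_[unitVec d N k] (v b) i ^ 2 ≤ (c / √(L * b)) ^ 2 := by
    rw [div_pow, Real.sq_sqrt (by positivity), le_div_iff₀ (by positivity)]
    simp only [Φ, Pi.add_apply, Pi.smul_apply, Pi.pow_apply, smul_eq_mul] at hΦb
    have : 0 ≤ L⁻¹ * v b i ^ 2 := by positivity
    field_simp at hΦb ⊢
    nlinarith
  exact abs_le_of_sq_le_sq hsq (by positivity)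

end Bernstein

section Duhamel

open NormedSpace MeasureTheory

variable {E : Type*} [NormedAddCommGroup E] [NormedSpace ℝ E] [CompleteSpace E]

lemma hasDerivAt_exp_smul_sub (A : E →L[ℝ] E) (t s : ℝ) :
    HasDerivAt (fun s : ℝ => exp ((t - s) • A)) (-(A * exp ((t - s) • A))) s := by
  have := (hasDerivAt_exp_smul_const' A (t - s)).scomp s ((hasDerivAt_id s).const_sub t)
  rwa [neg_smul, one_smul] at this

lemma intervalIntegrable_exp_smul_sub_apply (A : E →L[ℝ] E) {F : ℝ → E} {t : ℝ} (ht : 0 ≤ t)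
    (hF : ContinuousOn F (Icc 0 t)) :
    IntervalIntegrable (fun s => exp ((t - s) • A) (F s)) volume 0 t := by
  refine ContinuousOn.intervalIntegrable ?_
  rw [uIcc_of_le ht]
  exact (continuous_iff_continuousAt.2 fun s =>
    (hasDerivAt_exp_smul_sub A t s).continuousAt).continuousOn.clm_apply hF

theorem duhamel (A : E →L[ℝ] E) {u F : ℝ → E} {t : ℝ} (ht : 0 ≤ t)
    (hu : ∀ s ∈ Icc 0 t, HasDerivAt u (A (u s) + F s) s) (hF : ContinuousOn F (Icc 0 t)) :
    u t = exp (t • A) (u 0) + ∫ s in (0 : ℝ)..t, exp ((t - s) • A) (F s) := by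
  have hcomm : ∀ (s : ℝ) (x : E), A (exp (s • A) x) = exp (s • A) (A x) := fun s =>
    DFunLike.congr_fun ((Commute.refl A).smul_right s).exp_right.eq
  have hderiv : ∀ s ∈ uIcc 0 t, HasDerivAt (fun s => exp ((t - s) • A) (u s))
      (exp ((t - s) • A) (F s)) s := fun s hs => by
    rw [uIcc_of_le ht] at hs
    convert (hasDerivAt_exp_smul_sub A t s).clm_apply (hu s hs) using 1
    change _ = -A (exp ((t - s) • A) (u s)) + _
    rw [hcomm, map_add]
    abel
  rw [intervalIntegral.integral_eq_sub_of_hasDerivAt hderiv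
    (intervalIntegrable_exp_smul_sub_apply A ht hF)]
  simp

end Duhamel

section Integrals

open MeasureTheory

lemma integral_rpow_neg_half_sub (t : ℝ) :
    ∫ s in (0 : ℝ)..t, (t - s) ^ (-(1 / 2) : ℝ) = 2 * √t := by
  rw [intervalIntegral.integral_comp_sub_left (fun x : ℝ => x ^ (-(1 / 2) : ℝ)), sub_self,
    sub_zero, integral_rpow (Or.inl (by norm_num)), Real.zero_rpow (by norm_num),
    Real.sqrt_eq_rpow]
  norm_num
  ring

lemma norm_integral_le_of_norm_le_div_sqrt {E : Type*} [NormedAddCommGroup E] [NormedSpace ℝ E]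
    {g : ℝ → E} {c t : ℝ} (ht : 0 ≤ t) (h : ∀ s ∈ Ioo 0 t, ‖g s‖ ≤ c / √(t - s)) :
    ‖∫ s in (0 : ℝ)..t, g s‖ ≤ 2 * c * √t := by
  have hint : IntervalIntegrable (fun s => c * (t - s) ^ (-(1 / 2) : ℝ)) volume 0 t := by
    have := (intervalIntegral.intervalIntegrable_rpow' (a := 0) (b := t) (r := -(1 / 2))
      (by norm_num)).comp_sub_left t
    simp only [sub_self, sub_zero] at this
    exact this.symm.const_mul c
  calc ‖∫ s in (0 : ℝ)..t, g s‖ ≤ ∫ s in (0 : ℝ)..t, c * (t - s) ^ (-(1 / 2) : ℝ) := by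
        refine intervalIntegral.norm_integral_le_of_norm_le ht ?_ hint
        filter_upwards [Measure.ae_ne volume t] with s hst hs
        rw [Real.rpow_neg (sub_nonneg.2 hs.2), ← Real.sqrt_eq_rpow, ← div_eq_mul_inv]
        exact h s ⟨hs.1, lt_of_le_of_ne hs.2 hst⟩
    _ = 2 * c * √t := by
        rw [intervalIntegral.integral_const_mul, integral_rpow_neg_half_sub]
        ring

lemma fwdDiff_intervalIntegral {ι : Type*} [Fintype ι] [AddCommMonoid ι] {g : ℝ → ι → ℝ}
    {a b : ℝ} (hg : IntervalIntegrable g volume a b) (h i : ι) :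
    Δ_[h] (∫ s in a..b, g s) i = ∫ s in a..b, Δ_[h] (g s) i :=
  ((ContinuousLinearMap.proj (R := ℝ) (φ := fun _ : ι => ℝ) (i + h)
    - ContinuousLinearMap.proj i).intervalIntegral_comp_comm hg).symm

end Integrals

section HeatSemigroup

open NormedSpace

variable (d N : ℕ) [NeZero N]

def discLapCLM : (Site d N → ℝ) →L[ℝ] (Site d N → ℝ) :=
  LinearMap.toContinuousLinearMap
    { toFun := discLap d N, map_add' := discLap_add, map_smul' := discLap_smul }

def heatSemigroup (L r : ℝ) : (Site d N → ℝ) →L[ℝ] (Site d N → ℝ) :=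
  exp (r • L • discLapCLM d N)

variable {d N}

lemma isHeatFlow_heatSemigroup (L b : ℝ) (f : Site d N → ℝ) :
    IsHeatFlow L b (fun s => heatSemigroup d N L s f) := fun i s _ => by
  have := (hasDerivAt_exp_smul_const' (L • discLapCLM d N) s).clm_apply (hasDerivAt_const s f)
  simpa [heatSemigroup, discLapCLM] using hasDerivAt_pi.1 this i

@[simp] lemma heatSemigroup_zero (L : ℝ) (f : Site d N → ℝ) : heatSemigroup d N L 0 f = f := by
  simp [heatSemigroup]

theorem eq_heatSemigroup_add_integral {L t : ℝ} (ht : 0 ≤ t) {u F : ℝ → Site d N → ℝ}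
    (hu : ∀ j, ∀ s ∈ Icc 0 t, HasDerivAt (fun s => u s j) (L * discLap d N (u s) j + F s j) s)
    (hF : ContinuousOn F (Icc 0 t)) :
    u t = heatSemigroup d N L t (u 0) + ∫ s in (0 : ℝ)..t, heatSemigroup d N L (t - s) (F s) :=
  duhamel (L • discLapCLM d N) ht (fun s hs => hasDerivAt_pi.2 fun j => hu j s hs) hF

theorem abs_fwdDiff_integral_heatSemigroup_le {L t c : ℝ} (hL : 0 < L) (ht : 0 ≤ t)
    {F : ℝ → Site d N → ℝ} (hF : ContinuousOn F (Icc 0 t))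
    (hFc : ∀ s ∈ Ioo 0 t, ∀ j, |F s j| ≤ c) (k : Fin d) (i : Site d N) :
    |Δ_[unitVec d N k] (∫ s in (0 : ℝ)..t, heatSemigroup d N L (t - s) (F s)) i|
      ≤ 2 * (c / √L) * √t := by
  rw [fwdDiff_intervalIntegral (g := fun s => heatSemigroup d N L (t - s) (F s))
    (intervalIntegrable_exp_smul_sub_apply _ ht hF), ← Real.norm_eq_abs]
  refine norm_integral_le_of_norm_le_div_sqrt ht fun s hs => ?_
  rw [Real.norm_eq_abs, div_div, ← Real.sqrt_mul hL.le]
  refine (isHeatFlow_heatSemigroup L (t - s) (F s)).abs_fwdDiff_le_div_sqrt hL (sub_pos.2 hs.2) k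
    (fun j => ?_) i
  rw [heatSemigroup_zero]
  exact hFc s hs j

end HeatSemigroup

section ReactionTerm

variable {d N : ℕ} [NeZero N]

def bernoulliWeight (u : Site d N → ℝ) (η : Conf d N) : ℝ :=
  ∏ i, if η i then u i else 1 - u i

lemma bprob_eq_sum (u : Site d N → ℝ) (A : Set (Conf d N)) :
    bprob d N u A = ∑ η, bernoulliWeight u η * A.indicator 1 η := by
  rw [bprob, dif_neg (NeZero.ne N)]
  rfl

lemma sum_bernoulliWeight (u : Site d N → ℝ) : ∑ η, bernoulliWeight u η = 1 :=
  calc ∑ η, bernoulliWeight u η = ∏ i, ∑ b : Bool, if b then u i else 1 - u i :=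
        (Fintype.prod_sum fun i (b : Bool) => if b then u i else 1 - u i).symm
    _ = 1 := by simp

lemma bernoulliWeight_nonneg {u : Site d N → ℝ} (hu : ∀ i, u i ∈ Icc (0 : ℝ) 1)
    (η : Conf d N) : 0 ≤ bernoulliWeight u η :=
  Finset.prod_nonneg fun i _ => by
    split_ifs
    exacts [(hu i).1, sub_nonneg.2 (hu i).2]

lemma bprob_mem_Icc {u : Site d N → ℝ} (hu : ∀ i, u i ∈ Icc (0 : ℝ) 1) (A : Set (Conf d N)) :
    bprob d N u A ∈ Icc (0 : ℝ) 1 := by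
  have hind : ∀ η, A.indicator (1 : Conf d N → ℝ) η ∈ Icc (0 : ℝ) 1 := fun η => by
    by_cases hη : η ∈ A <;> simp [hη]
  rw [bprob_eq_sum]
  refine ⟨Finset.sum_nonneg fun η _ => mul_nonneg (bernoulliWeight_nonneg hu η) (hind η).1, ?_⟩
  calc ∑ η, bernoulliWeight u η * A.indicator 1 η ≤ ∑ η, bernoulliWeight u η :=
        Finset.sum_le_sum fun η _ =>
          mul_le_of_le_one_right (bernoulliWeight_nonneg hu η) (hind η).2
    _ = 1 := sum_bernoulliWeight u

lemma continuous_bprob (A : Set (Conf d N)) : Continuous fun u : Site d N → ℝ => bprob d N u A := by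
  simp only [bprob_eq_sum, bernoulliWeight]
  refine continuous_finsetSum _ fun η _ => (continuous_finsetProd _ fun i _ => ?_).mul
    continuous_const
  split_ifs
  exacts [continuous_apply i, continuous_const.sub (continuous_apply i)]

variable (V : Finset (Site d N)) (T β : ℝ)

lemma abs_Gfun_le {u : Site d N → ℝ} (hu : ∀ i, u i ∈ Icc (0 : ℝ) 1) : |Gfun d N V T u| ≤ 1 := by
  obtain ⟨hp0, hp1⟩ := bprob_mem_Icc hu
    {η | rho d N V η 0 ≥ 1 - (kappaN V.card T : ℝ) / (V.card : ℝ)}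
  obtain ⟨hm0, hm1⟩ := bprob_mem_Icc hu
    {η | rho d N V η 0 ≤ (kappaN V.card T : ℝ) / (V.card : ℝ)}
  obtain ⟨h0, h1⟩ := hu 0
  rw [Gfun, cplus, cminus, abs_le]
  constructor <;> nlinarith

lemma continuous_Gfun : Continuous (Gfun d N V T) :=
  ((continuous_const.sub (continuous_apply 0)).mul (continuous_bprob _)).sub
    ((continuous_apply 0).mul (continuous_bprob _))

def reaction (u : Site d N → ℝ) : Site d N → ℝ := fun j => β * (1 - 2 * u j) + Gi d N V T j u

lemma abs_reaction_le {u : Site d N → ℝ} (hu : ∀ i, u i ∈ Icc (0 : ℝ) 1) (j : Site d N) :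
    |reaction V T β u j| ≤ |β| + 1 := by
  have hlin : |1 - 2 * u j| ≤ 1 := abs_le.2 ⟨by linarith [(hu j).2], by linarith [(hu j).1]⟩
  calc |reaction V T β u j| ≤ |β| * |1 - 2 * u j| + |Gi d N V T j u| := by
        rw [reaction, ← abs_mul]; exact abs_add_le _ _
    _ ≤ |β| * 1 + 1 := by
        gcongr
        exact abs_Gfun_le V T fun i => hu (j + i)
    _ = |β| + 1 := by ring

lemma continuous_reaction : Continuous (reaction V T β : (Site d N → ℝ) → Site d N → ℝ) :=
  continuous_pi fun j => (continuous_const.mul (continuous_const.sub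
    (continuous_const.mul (continuous_apply j)))).add
    ((continuous_Gfun V T).comp (continuous_pi fun i => continuous_apply (j + i)))

end ReactionTerm

theorem stmt2_general
    (d : ℕ) (α β T C0 : ℝ)
    (hα : 0 < α) :
    ∃ C > (0 : ℝ), ∀ (N : ℕ), 1 ≤ N →
      ∀ (V : Finset (Site d N)), (0 : Site d N) ∉ V →
      ∀ (u u' : ℝ → Site d N → ℝ),
      (∀ t, 0 ≤ t → ∀ i, u t i ∈ Set.Icc (0 : ℝ) 1) →
      (∀ i, ∀ t, 0 ≤ t → HasDerivAt (fun s => u s i) (u' t i) t) →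
      (∀ t, 0 ≤ t → ∀ i,
        u' t i = 2 * α * (N : ℝ) ^ 2 * discLap d N (u t) i
          + β * (1 - 2 * u t i) + Gi d N V T i (u t)) →
      (∀ i, ∀ k : Fin d, |u 0 (i + unitVec d N k) - u 0 i| ≤ C0 / N) →
      ∀ t, 0 ≤ t → ∀ i, ∀ k : Fin d,
        |u t (i + unitVec d N k) - u t i| ≤ (C0 + C * Real.sqrt t) / N := by
  refine ⟨2 * (|β| + 1) / √(2 * α), by positivity, ?_⟩
  intro N hN V _ u u' hu hderiv hode hinit t ht i k
  have : NeZero N := ⟨by omega⟩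
  set L : ℝ := 2 * α * (N : ℝ) ^ 2
  set F : ℝ → Site d N → ℝ := fun s => reaction V T β (u s)
  have hF : ContinuousOn F (Icc 0 t) := (continuous_reaction V T β).comp_continuousOn <|
    continuousOn_pi.2 fun j s hs => (hderiv j s hs.1).continuousAt.continuousWithinAt
  have hsplit := eq_heatSemigroup_add_integral ht (fun j s hs =>
    (hderiv j s hs.1).congr_deriv (by rw [hode s hs.1 j, add_assoc]; rfl)) hF
  have hfree : |Δ_[unitVec d N k] (heatSemigroup d N L t (u 0)) i| ≤ C0 / N :=
    ((isHeatFlow_heatSemigroup L t (u 0)).fwdDiff _).abs_le_of_abs_le (by positivity) ht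
      (fun j => by rw [heatSemigroup_zero]; exact hinit j k) i
  have hforced := abs_fwdDiff_integral_heatSemigroup_le (L := L) (by positivity) ht hF
    (fun s hs => abs_reaction_le V T β (hu s hs.1.le)) k i
  have hsqrtL : √L = √(2 * α) * N := by
    rw [Real.sqrt_mul (by positivity), Real.sqrt_sq (Nat.cast_nonneg N)]
  change |Δ_[unitVec d N k] (u t) i| ≤ _
  rw [hsplit, fwdDiff_add, Pi.add_apply]
  refine (abs_add_le _ _).trans ((add_le_add hfree hforced).trans_eq ?_)
  rw [hsqrtL]
  field_simp

/-- gradient estimate for the discrete reaction–diffusion system: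
if the initial discrete gradient is bounded by `C₀/N`, then at time `t` the discrete
gradient is bounded by `(C₀ + C√t)/N`, with `C` independent of `N` and `t`. -/
theorem stmt2
    (d : ℕ) (hd : 1 ≤ d) (α β T C0 : ℝ)
    (hα : 0 < α) (hβ : 0 < β) (hT : T ∈ Set.Icc (0 : ℝ) 1) (hC0 : 0 < C0) :
    ∃ C > (0 : ℝ), ∀ (N : ℕ), 1 ≤ N →
      ∀ (V : Finset (Site d N)), (0 : Site d N) ∉ V →
      ∀ (u u' : ℝ → Site d N → ℝ),
      (∀ t, 0 ≤ t → ∀ i, u t i ∈ Set.Icc (0 : ℝ) 1) →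
      (∀ i, ∀ t, 0 ≤ t → HasDerivAt (fun s => u s i) (u' t i) t) →
      (∀ t, 0 ≤ t → ∀ i,
        u' t i = 2 * α * (N : ℝ) ^ 2 * discLap d N (u t) i
          + β * (1 - 2 * u t i) + Gi d N V T i (u t)) →
      (∀ i, ∀ k : Fin d, |u 0 (i + unitVec d N k) - u 0 i| ≤ C0 / N) →
      ∀ t, 0 ≤ t → ∀ i, ∀ k : Fin d,
        |u t (i + unitVec d N k) - u t i| ≤ (C0 + C * Real.sqrt t) / N :=
  stmt2_general d α β T C0 hα
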